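/- arXiv:1409.2284 — 8 statements merged into one kernel-verified Lean document; each statement's English description precedes it below -/
import Mathlib

section
/- Let z_1, …, z_n be pairwise distinct complex numbers. Then (z_1, …, z_n) satisfies the normalized system if and only if it satisfies the transformed polynomial system. -/
/-!
Multiplying the `j`-th equation of the normalized system by `Γ_j z_j^k` and summing over `j`
gives the `k`-th transformed equation: the pair `{i, j}` of double-sum terms combines into
`Γ_i Γ_j (z_i^k - z_j^k) / (z_i - z_j)`, a complete homogeneous polynomial of degree `k - 1`.
Conversely, the first `n` of these weighted sums of the residuals `r_j` vanish, so the vector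
`(Γ_j r_j)_j` is killed by the Vandermonde matrix of the distinct nodes `z_j`, hence is zero.
-/

open Finset

theorem sum_sum_ite_ne_eq_sum_sum_ite_lt {ι M : Type*} [Fintype ι] [LinearOrder ι]
    [AddCommMonoid M] (f : ι → ι → M) :
    ∑ i, ∑ j, (if i ≠ j then f i j else 0)
      = ∑ i, ∑ j, (if i < j then f i j + f j i else 0) := by
  have split_ne : ∀ i j : ι, (if i ≠ j then f i j else 0)
      = (if i < j then f i j else 0) + (if j < i then f i j else 0) := by
    intro i j
    rcases lt_trichotomy i j with h | rfl | h
    · simp [h, h.ne, h.asymm]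
    · simp
    · simp [h, h.ne', h.asymm]
  simp_rw [split_ne, sum_add_distrib]
  rw [sum_comm (f := fun i j => if j < i then f i j else 0), ← sum_add_distrib]
  simp_rw [← sum_add_distrib, ite_add_ite, add_zero]

theorem pow_sub_pow_div_sub {K : Type*} [Field K] {x y : K} (hxy : x ≠ y) (k : ℕ) :
    (x ^ k - y ^ k) / (x - y)
      = if k = 0 then 0 else ∑ p ∈ antidiagonal (k - 1), x ^ p.1 * y ^ p.2 := by
  rcases k with _ | k
  · simp
  · rw [div_eq_iff (sub_ne_zero.mpr hxy), ← geom_sum₂_mul,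
      Nat.sum_antidiagonal_eq_sum_range_succ_mk]
    simp

theorem sum_mul_pow_mul_sum_div_sub {ι K : Type*} [Fintype ι] [LinearOrder ι] [Field K]
    (Γ z : ι → K) (k : ℕ) :
    ∑ j, Γ j * z j ^ k * ∑ l ∈ univ.erase j, Γ l / (z j - z l)
      = ∑ i, ∑ j, if i < j then Γ i * Γ j * ((z i ^ k - z j ^ k) / (z i - z j)) else 0 := by
  have expand : ∀ j, Γ j * z j ^ k * ∑ l ∈ univ.erase j, Γ l / (z j - z l)
      = ∑ l, if j ≠ l then Γ j * Γ l * (z j ^ k / (z j - z l)) else 0 := by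
    intro j
    rw [mul_sum, ← filter_ne' univ j, sum_filter]
    refine sum_congr rfl fun l _ => ?_
    simp only [ne_comm (a := l)]
    split_ifs <;> ring
  simp_rw [expand]
  rw [sum_sum_ite_ne_eq_sum_sum_ite_lt]
  -- No distinctness is needed: `a / (z j - z i) = -(a / (z i - z j))` also holds for the junk `/ 0`.
  refine sum_congr rfl fun i _ => sum_congr rfl fun j _ => ?_
  rw [← neg_sub (z i) (z j), div_neg, sub_div]
  split_ifs <;> ring

theorem sum_mul_pow_mul_sum_div_sub_of_injective {ι K : Type*} [Fintype ι] [LinearOrder ι]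
    [Field K] (Γ : ι → K) {z : ι → K} (hz : Function.Injective z) (k : ℕ) :
    ∑ j, Γ j * z j ^ k * ∑ l ∈ univ.erase j, Γ l / (z j - z l)
      = if k = 0 then 0
        else ∑ i, ∑ j, if i < j then
            Γ i * Γ j * ∑ p ∈ antidiagonal (k - 1), z i ^ p.1 * z j ^ p.2 else 0 := by
  rw [sum_mul_pow_mul_sum_div_sub]
  split_ifs with hk
  · refine sum_eq_zero fun i _ => sum_eq_zero fun j _ => ?_
    simp [hk]
  · refine sum_congr rfl fun i _ => sum_congr rfl fun j _ => ?_
    split_ifs with hij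
    · rw [pow_sub_pow_div_sub (hz.ne hij.ne), if_neg hk]
    · rfl

theorem forall_eq_zero_iff_forall_sum_mul_pow_mul_eq_zero {n : ℕ} {K : Type*} [Field K]
    {Γ z r : Fin n → K} (hz : Function.Injective z) (hΓ : ∀ j, Γ j ≠ 0) :
    (∀ j, r j = 0) ↔ ∀ k ∈ range n, ∑ j, Γ j * z j ^ k * r j = 0 := by
  refine ⟨fun hr k _ => by simp [hr], fun hmoments j => ?_⟩
  have hΓr : (fun j => Γ j * r j) = 0 := by
    refine Matrix.eq_zero_of_forall_pow_sum_mul_pow_eq_zero hz fun k => ?_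
    rw [← hmoments k (mem_range.mpr k.isLt)]
    exact sum_congr rfl fun j _ => by ring
  exact (mul_eq_zero.mp (congrFun hΓr j)).resolve_left (hΓ j)

theorem normalized_iff_transformed_general
    (n : ℕ) (m : ℕ)
    (Γ : Fin n → ℝ) (hΓ : ∀ j, Γ j ≠ 0)
    (W : Polynomial ℂ)
    (z : Fin n → ℂ) (hz : ∀ i j, i ≠ j → z i ≠ z j) :
    (∀ j, z j ^ m + W.eval (z j)
        = ∑ k ∈ Finset.univ.erase j, (Γ k : ℂ) / (z j - z k))
    ↔ (∀ k ∈ Finset.range n,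
        (∑ j, (Γ j : ℂ) * z j ^ (m + k))
          + ∑ j, (Γ j : ℂ) * z j ^ k * W.eval (z j)
        = if k = 0 then 0
          else ∑ i, ∑ j, if i < j then
              (Γ i : ℂ) * (Γ j : ℂ) *
                ∑ p ∈ Finset.HasAntidiagonal.antidiagonal (k - 1), z i ^ p.1 * z j ^ p.2
            else 0) := by
  have hz_inj : Function.Injective z := fun i j hij => by_contra fun hne => hz i j hne hij
  have hΓ_ne : ∀ j, (Γ j : ℂ) ≠ 0 := fun j => Complex.ofReal_ne_zero.mpr (hΓ j)
  simp_rw [← sub_eq_zero (a := z _ ^ m + _)]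
  refine (forall_eq_zero_iff_forall_sum_mul_pow_mul_eq_zero hz_inj hΓ_ne).trans <|
    forall₂_congr fun k _ => ?_
  rw [← sum_mul_pow_mul_sum_div_sub_of_injective _ hz_inj, ← sub_eq_zero (a := _ + _),
    ← sum_add_distrib, ← sum_sub_distrib]
  exact Iff.of_eq <| congrArg (· = 0) <| sum_congr rfl fun j _ => by ring

/-- For pairwise distinct `z_1, …, z_n`, the normalized system
`z_j^m + W(z_j) = Σ_{k≠j} Γ_k/(z_j − z_k)` holds iff the transformed polynomial
system holds.  The equation index `k` below is 0-based, corresponding to the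
paper's equation `k+1`. -/
theorem normalized_iff_transformed
    (n : ℕ) (hn : 2 ≤ n) (m : ℕ) (hm : 1 ≤ m)
    (Γ : Fin n → ℝ) (hΓ : ∀ j, Γ j ≠ 0)
    (W : Polynomial ℂ) (hW : W.natDegree ≤ m - 1)
    (z : Fin n → ℂ) (hz : ∀ i j, i ≠ j → z i ≠ z j) :
    (∀ j, z j ^ m + W.eval (z j)
        = ∑ k ∈ Finset.univ.erase j, (Γ k : ℂ) / (z j - z k))
    ↔ (∀ k ∈ Finset.range n,
        (∑ j, (Γ j : ℂ) * z j ^ (m + k))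
          + ∑ j, (Γ j : ℂ) * z j ^ k * W.eval (z j)
        = if k = 0 then 0
          else ∑ i, ∑ j, if i < j then
              (Γ i : ℂ) * (Γ j : ℂ) *
                ∑ p ∈ Finset.HasAntidiagonal.antidiagonal (k - 1), z i ^ p.1 * z j ^ p.2
            else 0) :=
  normalized_iff_transformed_general n m Γ hΓ W z hz
end

section
/- Let k ≥ 1 and m ≥ 1 be integers and let Γ_1, …, Γ_k ∈ ℂ \ {0} satisfy Σ_{j∈I} Γ_j ≠ 0 for every nonempty subset I ⊆ {1, …, k}. Then there is no (z_1, …, z_k) ∈ (ℂ \ {0})^k satisfying Σ_{j=1}^k Γ_j z_j^{m+i−1} = 0 for all i = 1, …, k. -/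
open Finset

/-- the special reduced system
`Σ_j Γ_j z_j^{m+i−1} = 0` (`i = 1, …, k`) has no solution in `(ℂ∖{0})^k`
provided every nonempty subset of the circulations has nonzero sum.
The equation index `i` below is 0-based, so the exponent is `m + i`. -/
theorem special_reduced_system_no_solution
    (k m : ℕ) (hk : 1 ≤ k) (hm : 1 ≤ m)
    (Γ : Fin k → ℂ) (hΓ : ∀ j, Γ j ≠ 0)
    (h : ∀ I : Finset (Fin k), I.Nonempty → ∑ j ∈ I, Γ j ≠ 0) :
    ¬ ∃ z : Fin k → ℂ, (∀ j, z j ≠ 0) ∧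
      ∀ i ∈ Finset.range k, ∑ j, Γ j * z j ^ (m + i) = 0 := by
  rintro ⟨z, hz, heq⟩
  -- group indices by the value of z
  set S : Finset ℂ := Finset.univ.image z with hS
  have hScard : S.card ≤ k := by
    calc S.card ≤ (Finset.univ : Finset (Fin k)).card := Finset.card_image_le
    _ = k := by simp
  -- fiberwise coefficient
  set c : ℂ → ℂ := fun a => ∑ j ∈ Finset.univ.filter (fun j => z j = a), Γ j with hc
  have hcne : ∀ a ∈ S, c a ≠ 0 := by
    intro a ha
    apply h
    obtain ⟨j, _, hj⟩ := Finset.mem_image.mp ha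
    exact ⟨j, Finset.mem_filter.mpr ⟨Finset.mem_univ j, hj⟩⟩
  have key : ∀ i < k, ∑ a ∈ S, c a * a ^ (m + i) = 0 := by
    intro i hi
    have := heq i (Finset.mem_range.mpr hi)
    rw [← this]
    rw [← Finset.sum_fiberwise_of_maps_to (g := z) (t := S)
      (fun j _ => Finset.mem_image.mpr ⟨j, Finset.mem_univ j, rfl⟩)
      (fun j => Γ j * z j ^ (m + i))]
    refine Finset.sum_congr rfl fun a _ => ?_
    rw [hc]
    simp only [Finset.sum_mul]
    refine Finset.sum_congr rfl fun j hj => ?_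
    rw [(Finset.mem_filter.mp hj).2]
  -- enumerate S
  set e := S.equivFin
  set w : Fin S.card → ℂ := fun t => (e.symm t : ℂ) with hw
  have hwinj : Function.Injective w := fun a b hab => by
    apply e.symm.injective; exact Subtype.ext hab
  have hwS : ∀ t, w t ∈ S := fun t => (e.symm t).2
  set v : Fin S.card → ℂ := fun t => c (w t) * w t ^ m with hv
  have hv0 : v = 0 := by
    apply Matrix.eq_zero_of_forall_pow_sum_mul_pow_eq_zero hwinj
    intro i
    have : ∑ t, v t * w t ^ (i : ℕ) = ∑ a ∈ S, c a * a ^ (m + (i : ℕ)) := by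
      rw [← Finset.sum_attach S (fun a => c a * a ^ (m + (i : ℕ))),
        ← Equiv.sum_comp e (fun t => v t * w t ^ (i : ℕ))]
      refine Finset.sum_congr rfl fun x _ => ?_
      simp only [hv, hw, Equiv.symm_apply_apply]
      rw [pow_add, mul_assoc]
    rw [this]
    exact key i (lt_of_lt_of_le i.2 hScard)
  -- S is nonempty, contradiction
  have hSne : S.Nonempty := by
    obtain ⟨j⟩ : Nonempty (Fin k) := ⟨⟨0, hk⟩⟩
    exact ⟨z j, Finset.mem_image.mpr ⟨j, Finset.mem_univ j, rfl⟩⟩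
  obtain ⟨a, ha⟩ := hSne
  set t := e ⟨a, ha⟩
  have hwt : w t = a := by simp [hw, t]
  have hz0 : w t ≠ 0 := by
    obtain ⟨j, _, hj⟩ := Finset.mem_image.mp (hwS t)
    rw [← hj]; exact hz j
  have := congrFun hv0 t
  simp only [hv, Pi.zero_apply, mul_eq_zero] at this
  rcases this with h1 | h2
  · exact hcne (w t) (hwS t) h1
  · exact absurd ((pow_eq_zero_iff (Nat.one_le_iff_ne_zero.mp hm)).mp h2) hz0
end

section
/- Consider the general system with coefficients Γ_1, …, Γ_n ∈ ℂ \ {0} and C_0 ∈ ℂ \ {0}. If Σ_{j∈I} Γ_j ≠ 0 for every nonempty subset I ⊆ {1, …, n}, then the set of solutions (z_1, …, z_n) ∈ ℂ^n of the general system is finite. -/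
open Finset

/-- The general system of Section 4.1.  The equation index `k` is 0-based,
corresponding to the paper's equation `k+1`: equation `k` reads
`Σ_j Γ_j z_j^{m+k} + Σ_j Σ_{r<m} A^{k,r}_j z_j^{r+k} + [k = 1] C₀
  + [k ≥ 2] (Σ_j C^k_j z_j^{k−1} + Σ_{r+s=k−1, r,s≥1, i<j} C^{k,r,s}_{i,j} z_i^r z_j^s) = 0`. -/
def GeneralSystem (n m : ℕ) (Γ : Fin n → ℂ) (C0 : ℂ)
    (A : ℕ → ℕ → Fin n → ℂ) (C : ℕ → Fin n → ℂ)
    (Cc : ℕ → ℕ → ℕ → Fin n → Fin n → ℂ) (z : Fin n → ℂ) : Prop :=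
  ∀ k ∈ Finset.range n,
    (∑ j, Γ j * z j ^ (m + k))
    + (∑ j, ∑ r ∈ Finset.range m, A k r j * z j ^ (r + k))
    + (if k = 1 then C0 else 0)
    + (if 2 ≤ k then
        (∑ j, C k j * z j ^ (k - 1))
        + ∑ i, ∑ j, if i < j then
            ∑ p ∈ Finset.HasAntidiagonal.antidiagonal (k - 1),
              (if p.1 ≠ 0 ∧ p.2 ≠ 0 then
                Cc k p.1 p.2 i j * z i ^ p.1 * z j ^ p.2 else 0)
          else 0
      else 0) = 0

/-!
The leading forms `F_k = Σ_j Γ_j X_j ^ (m + k)`, `k < n`, of the equations have no common zero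
besides `0`: grouping the coordinates of a common zero by value turns `F_k = 0` into a Vandermonde
system in the distinct values `w`, which forces `(Σ_{z_j = w} Γ_j) w ^ m = 0`, hence `w = 0`.
By the Nullstellensatz some `X_j ^ N` lies in the ideal of the leading forms, and taking the
degree-`N` homogeneous component of a representation gives `X_j ^ N ≡ r_j` modulo the ideal `J` of
the actual equations, with `deg r_j < N`. Hence every polynomial is congruent modulo `J` to one of
bounded degree, `ℂ[X] ⧸ J` is finite-dimensional, each `X_j` is a root of a nonzero univariate
polynomial modulo `J`, and the coordinates of a solution are among its finitely many roots.
-/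

theorem Finset.eq_zero_of_forall_sum_mul_pow_eq_zero {R : Type*} [CommRing R] [IsDomain R]
    {s : Finset R} {c : R → R} (h : ∀ k < #s, ∑ w ∈ s, c w * w ^ k = 0) :
    ∀ w ∈ s, c w = 0 := by
  intro w hw
  have hv := Matrix.eq_zero_of_forall_pow_sum_mul_pow_eq_zero
    (f := fun i => (s.equivFin.symm i : R)) (v := fun i => c (s.equivFin.symm i))
    (Subtype.val_injective.comp s.equivFin.symm.injective) fun i => by
      rw [← h i i.isLt, ← s.sum_coe_sort]
      exact s.equivFin.symm.sum_comp fun x : s => c x * (x : R) ^ (i : ℕ)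
  simpa using congrFun hv (s.equivFin ⟨w, hw⟩)

theorem eq_zero_of_forall_sum_mul_pow_add_eq_zero {ι R : Type*} [Fintype ι] [CommRing R]
    [IsDomain R] {Γ : ι → R} (hΓ : ∀ I : Finset ι, I.Nonempty → ∑ j ∈ I, Γ j ≠ 0)
    {m : ℕ} (hm : m ≠ 0)
    {u : ι → R} (hu : ∀ k < Fintype.card ι, ∑ j, Γ j * u j ^ (m + k) = 0) : u = 0 := by
  classical
  have hfiber : ∀ w ∈ univ.image u, (∑ j with u j = w, Γ j) * w ^ m = 0 := by
    refine Finset.eq_zero_of_forall_sum_mul_pow_eq_zero fun k hk => ?_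
    rw [← hu k (hk.trans_le (card_image_le.trans_eq card_univ)),
      ← sum_fiberwise_of_maps_to fun j _ => mem_image_of_mem u (mem_univ j)]
    refine sum_congr rfl fun w _ => ?_
    rw [mul_assoc, ← pow_add, sum_mul]
    exact sum_congr rfl fun j hj => by rw [(mem_filter.1 hj).2]
  funext j
  have hne : ∑ i with u i = u j, Γ i ≠ 0 := hΓ _ ⟨j, by simp⟩
  simpa [hne, hm] using hfiber (u j) (mem_image_of_mem u (mem_univ j))

namespace MvPolynomial

variable {σ R ι : Type*}

theorem homogeneousComponent_mul_of_isHomogeneous [CommSemiring R] (p : MvPolynomial σ R)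
    {F : MvPolynomial σ R} {e N : ℕ} (hF : F.IsHomogeneous e) (he : e ≤ N) :
    homogeneousComponent N (p * F) = homogeneousComponent (N - e) p * F := by
  conv_lhs => rw [← sum_homogeneousComponent p, sum_mul, map_sum]
  rw [sum_eq_single (N - e)]
  · exact homogeneousComponent_of_mem
      ((homogeneousComponent_isHomogeneous _ p).mul hF) |>.trans (if_pos (by omega))
  · intro i _ hi
    exact homogeneousComponent_of_mem
      ((homogeneousComponent_isHomogeneous i p).mul hF) |>.trans (if_neg (by omega))
  · intro hp
    rw [homogeneousComponent_eq_zero (N - e) p (by simp at hp; omega), zero_mul, map_zero]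

theorem exists_sub_mem_span_add_of_isHomogeneous [CommRing R] [Fintype ι]
    {F L : ι → MvPolynomial σ R} {e : ι → ℕ} (hF : ∀ k, (F k).IsHomogeneous (e k))
    (hL : ∀ k, (L k).totalDegree < e k) {p : MvPolynomial σ R} {N : ℕ} (hp : p.IsHomogeneous N)
    (hN : 0 < N) (he : ∀ k, e k ≤ N) (hpF : p ∈ Ideal.span (Set.range F)) :
    ∃ r : MvPolynomial σ R, r.totalDegree < N ∧
      p - r ∈ Ideal.span (Set.range fun k => F k + L k) := by
  obtain ⟨c, hc⟩ := Ideal.mem_span_range_iff_exists_fun.1 hpF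
  set h := fun k => homogeneousComponent (N - e k) (c k)
  have hp_eq : p = ∑ k, h k * F k := by
    rw [← homogeneousComponent_eq_self hp, ← hc, map_sum]
    exact sum_congr rfl fun k _ => homogeneousComponent_mul_of_isHomogeneous _ (hF k) (he k)
  refine ⟨-∑ k, h k * L k, ?_, ?_⟩
  · rw [totalDegree_neg]
    have hdeg : ∀ k, (h k * L k).totalDegree ≤ N - 1 := fun k => by
      have : (h k).totalDegree ≤ N - e k := (homogeneousComponent_isHomogeneous _ _).totalDegree_le
      have := hL k
      have := he k
      exact (totalDegree_mul _ _).trans (by omega)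
    exact (totalDegree_finsetSum_le fun k _ => hdeg k).trans_lt (by omega)
  · rw [sub_neg_eq_add, hp_eq, ← sum_add_distrib]
    simp_rw [← mul_add]
    exact Ideal.sum_mem _ fun k _ => Ideal.mul_mem_left _ _ (Ideal.subset_span ⟨k, rfl⟩)

theorem exists_X_pow_sub_mem_span_add [CommRing R] [Fintype ι]
    {F L : ι → MvPolynomial σ R} {e : ι → ℕ} (hF : ∀ k, (F k).IsHomogeneous (e k))
    (hL : ∀ k, (L k).totalDegree < e k) {j : σ} (hj : X j ∈ (Ideal.span (Set.range F)).radical) :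
    ∃ (N : ℕ) (r : MvPolynomial σ R), r.totalDegree < N ∧
      X j ^ N - r ∈ Ideal.span (Set.range fun k => F k + L k) := by
  obtain ⟨N₀, hN₀⟩ := hj
  refine ⟨N₀ + (∑ k, e k + 1), exists_sub_mem_span_add_of_isHomogeneous hF hL
    (isHomogeneous_X_pow j _) (by omega) (fun k => ?_) ?_⟩
  · have := single_le_sum (fun k _ => Nat.zero_le (e k)) (mem_univ k)
    omega
  · rw [pow_add]
    exact Ideal.mul_mem_right _ _ hN₀

theorem exists_totalDegree_lt_monomial_sub_mem [CommRing R] [Fintype σ]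
    {J : Ideal (MvPolynomial σ R)} {N : σ → ℕ} {r : σ → MvPolynomial σ R}
    (hr : ∀ i, (r i).totalDegree < N i) (hJ : ∀ i, X i ^ N i - r i ∈ J)
    {d : σ →₀ ℕ} (hd : ∑ i, (N i - 1) < d.degree) (a : R) :
    ∃ q : MvPolynomial σ R, q.totalDegree < d.degree ∧ monomial d a - q ∈ J := by
  rw [d.degree_eq_sum] at hd
  obtain ⟨i, -, hi⟩ := exists_lt_of_sum_lt hd
  have hle : Finsupp.single i (N i) ≤ d := Finsupp.single_le_iff.2 (by omega)
  set d' := d - Finsupp.single i (N i)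
  have hd' : d = Finsupp.single i (N i) + d' := (add_tsub_cancel_of_le hle).symm
  have hdeg : d.degree = N i + d'.degree := by rw [hd', map_add, Finsupp.degree_single]
  refine ⟨r i * monomial d' a, ?_, ?_⟩
  · have := hr i
    have : (monomial d' a).totalDegree ≤ d'.degree := totalDegree_monomial_le d' a
    exact (totalDegree_mul _ _).trans_lt (by omega)
  · have hmono : monomial d a = X i ^ N i * monomial d' a := by
      rw [X_pow_eq_monomial, monomial_mul, one_mul, ← hd']
    rw [hmono, ← sub_mul]
    exact Ideal.mul_mem_right _ _ (hJ i)

theorem exists_totalDegree_le_sub_mem [CommRing R] [Fintype σ]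
    {J : Ideal (MvPolynomial σ R)} {N : σ → ℕ} {r : σ → MvPolynomial σ R}
    (hr : ∀ i, (r i).totalDegree < N i) (hJ : ∀ i, X i ^ N i - r i ∈ J)
    (p : MvPolynomial σ R) :
    ∃ q : MvPolynomial σ R, q.totalDegree ≤ ∑ i, (N i - 1) ∧ p - q ∈ J := by
  induction hD : p.totalDegree using Nat.strong_induction_on generalizing p with
  | _ D ih =>
  by_cases hB : D ≤ ∑ i, (N i - 1)
  · exact ⟨p, hD ▸ hB, by simp⟩
  have hlower : ∀ d, ∃ q : MvPolynomial σ R,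
      q.totalDegree < D ∧ monomial d (coeff d p) - q ∈ J := by
    intro d
    by_cases hd : d ∈ p.support
    · rcases (hD ▸ le_totalDegree hd : d.degree ≤ D).lt_or_eq with hlt | rfl
      · exact ⟨monomial d (coeff d p), (totalDegree_monomial_le _ _).trans_lt hlt, by simp⟩
      · exact exists_totalDegree_lt_monomial_sub_mem hr hJ (by omega) _
    · exact ⟨0, by simp; omega, by simp [notMem_support_iff.1 hd]⟩
  choose q hq hqJ using hlower
  obtain ⟨w, hw, hwJ⟩ := ih _ ((totalDegree_finsetSum_le (s := p.support) (d := D - 1)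
    fun d _ => by have := hq d; omega).trans_lt (by omega)) (∑ d ∈ p.support, q d) rfl
  have hpq : p - ∑ d ∈ p.support, q d ∈ J := by
    have hsplit : p - ∑ d ∈ p.support, q d = ∑ d ∈ p.support, (monomial d (coeff d p) - q d) := by
      rw [sum_sub_distrib, ← p.as_sum]
    rw [hsplit]
    exact Ideal.sum_mem _ fun d _ => hqJ d
  exact ⟨w, hw, by simpa using J.add_mem hpq hwJ⟩

theorem finite_quotient_of_X_pow_sub_mem [CommRing R] [Fintype σ]
    {J : Ideal (MvPolynomial σ R)} {N : σ → ℕ} {r : σ → MvPolynomial σ R}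
    (hr : ∀ i, (r i).totalDegree < N i) (hJ : ∀ i, X i ^ N i - r i ∈ J) :
    Module.Finite R (MvPolynomial σ R ⧸ J) := by
  refine Module.Finite.of_surjective ((Ideal.Quotient.mkₐ R J).toLinearMap ∘ₗ
    (restrictTotalDegree σ R (∑ i, (N i - 1))).subtype) fun x => ?_
  obtain ⟨p, rfl⟩ := Ideal.Quotient.mk_surjective x
  obtain ⟨q, hq, hpq⟩ := exists_totalDegree_le_sub_mem hr hJ p
  exact ⟨⟨q, (mem_restrictTotalDegree _ _ q).2 hq⟩,
    (Ideal.Quotient.mk_eq_mk_iff_sub_mem _ _).2 (by simpa using J.neg_mem hpq)⟩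

theorem finite_zeroLocus_of_finite_quotient {K : Type*} [Field K] [Finite σ]
    (J : Ideal (MvPolynomial σ K)) [Module.Finite K (MvPolynomial σ K ⧸ J)] :
    (zeroLocus K J).Finite := by
  set x := fun i => Ideal.Quotient.mk J (X i)
  have hq : ∀ i, Polynomial.aeval (X i) (minpoly K (x i)) ∈ J := fun i => by
    rw [← Ideal.Quotient.eq_zero_iff_mem, ← Ideal.Quotient.mkₐ_eq_mk K,
      ← Polynomial.aeval_algHom_apply]
    exact minpoly.aeval K (x i)
  refine (Set.Finite.pi fun i => Polynomial.finite_setOfPred_isRoot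
    (minpoly.ne_zero (IsIntegral.of_finite K (x i)))).subset fun z hz => ?_
  refine Set.mem_pi.2 fun i _ => ?_
  have := (mem_zeroLocus_iff.1 hz) _ (hq i)
  rw [← Polynomial.aeval_algHom_apply, aeval_X] at this
  simpa [Polynomial.IsRoot] using this

noncomputable def weightedPsum [Fintype ι] [CommSemiring R] (Γ : ι → R) (e : ℕ) :
    MvPolynomial ι R :=
  ∑ j, Γ j • X j ^ e

theorem isHomogeneous_weightedPsum [Fintype ι] [CommSemiring R] (Γ : ι → R) (e : ℕ) :
    (weightedPsum Γ e).IsHomogeneous e :=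
  IsHomogeneous.sum _ _ _ fun j _ =>
    (homogeneousSubmodule ι R e).smul_mem (Γ j) (isHomogeneous_X_pow j e)

@[simp]
theorem eval_weightedPsum [Fintype ι] [CommSemiring R] (Γ : ι → R) (e : ℕ)
    (z : ι → R) : eval z (weightedPsum Γ e) = ∑ j, Γ j * z j ^ e := by
  simp [weightedPsum]

theorem X_mem_radical_span_weightedPsum {K : Type*} [Fintype ι] [Field K] [IsAlgClosed K]
    {Γ : ι → K} (hΓ : ∀ I : Finset ι, I.Nonempty → ∑ j ∈ I, Γ j ≠ 0) {m n : ℕ} (hm : m ≠ 0)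
    (hn : Fintype.card ι ≤ n) (j : ι) :
    X j ∈ (Ideal.span (Set.range fun k : Fin n => weightedPsum Γ (m + k))).radical := by
  rw [← vanishingIdeal_zeroLocus_eq_radical (K := K), mem_vanishingIdeal_iff]
  intro z hz
  have hz0 : z = 0 := eq_zero_of_forall_sum_mul_pow_add_eq_zero hΓ hm fun k hk => by
    simpa using hz _ (Ideal.subset_span ⟨⟨k, hk.trans_le hn⟩, rfl⟩)
  simp [hz0]

end MvPolynomial

open MvPolynomial

noncomputable def generalSystemLower (n m : ℕ) (C0 : ℂ) (A : ℕ → ℕ → Fin n → ℂ)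
    (C : ℕ → Fin n → ℂ) (Cc : ℕ → ℕ → ℕ → Fin n → Fin n → ℂ) (k : ℕ) :
    MvPolynomial (Fin n) ℂ :=
  (∑ j, ∑ r ∈ range m, A k r j • X j ^ (r + k))
  + (if k = 1 then MvPolynomial.C C0 else 0)
  + (if 2 ≤ k then
      (∑ j, C k j • X j ^ (k - 1))
      + ∑ i, ∑ j, if i < j then
          ∑ p ∈ antidiagonal (k - 1),
            (if p.1 ≠ 0 ∧ p.2 ≠ 0 then Cc k p.1 p.2 i j • (X i ^ p.1 * X j ^ p.2) else 0)
        else 0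
    else 0)

theorem totalDegree_generalSystemLower_lt (n : ℕ) {m : ℕ} (hm : m ≠ 0) (C0 : ℂ)
    (A : ℕ → ℕ → Fin n → ℂ) (C : ℕ → Fin n → ℂ) (Cc : ℕ → ℕ → ℕ → Fin n → Fin n → ℂ) (k : ℕ) :
    (generalSystemLower n m C0 A C Cc k).totalDegree < m + k := by
  have hpow (a : ℂ) (j : Fin n) (e : ℕ) : (a • X j ^ e : MvPolynomial (Fin n) ℂ).totalDegree ≤ e :=
    (totalDegree_smul_le _ _).trans (totalDegree_X_pow _ _).le
  have hmul (a : ℂ) (i j : Fin n) (e f : ℕ) :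
      (a • (X i ^ e * X j ^ f) : MvPolynomial (Fin n) ℂ).totalDegree ≤ e + f :=
    (totalDegree_smul_le _ _).trans <| (totalDegree_mul _ _).trans <|
      add_le_add (totalDegree_X_pow _ _).le (totalDegree_X_pow _ _).le
  suffices (generalSystemLower n m C0 A C Cc k).totalDegree ≤ m + k - 1 by omega
  refine (totalDegree_add _ _).trans (max_le ((totalDegree_add _ _).trans (max_le ?_ ?_)) ?_)
  · exact totalDegree_finsetSum_le fun j _ => totalDegree_finsetSum_le fun r hr =>
      (hpow _ _ _).trans (by rw [mem_range] at hr; omega)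
  · split_ifs <;> simp
  · split_ifs
    · refine (totalDegree_add _ _).trans (max_le ?_ ?_)
      · exact totalDegree_finsetSum_le fun j _ => (hpow _ _ _).trans (by omega)
      · refine totalDegree_finsetSum_le fun i _ => totalDegree_finsetSum_le fun j _ => ?_
        split_ifs
        · refine totalDegree_finsetSum_le fun p hp => ?_
          split_ifs
          · exact (hmul _ _ _ _ _).trans (by rw [mem_antidiagonal.1 hp]; omega)
          · simp
        · simp
    · simp

theorem setOf_generalSystem_subset_zeroLocus (n m : ℕ) (Γ : Fin n → ℂ) (C0 : ℂ)
    (A : ℕ → ℕ → Fin n → ℂ) (C : ℕ → Fin n → ℂ) (Cc : ℕ → ℕ → ℕ → Fin n → Fin n → ℂ) :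
    {z | GeneralSystem n m Γ C0 A C Cc z} ⊆ zeroLocus ℂ
      (Ideal.span (Set.range fun k : Fin n =>
        weightedPsum Γ (m + k) + generalSystemLower n m C0 A C Cc k)) := by
  intro z hz p hp
  refine (Ideal.span_le (I := RingHom.ker (aeval z)).2 ?_ hp : p ∈ RingHom.ker (aeval z))
  rintro _ ⟨k, rfl⟩
  simpa [generalSystemLower, apply_ite (eval z), mul_assoc, add_assoc] using
    hz k (mem_range.2 k.isLt)

theorem general_system_finite_general
    (n : ℕ) (m : ℕ) (hm : 1 ≤ m)
    (Γ : Fin n → ℂ) (C0 : ℂ)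
    (A : ℕ → ℕ → Fin n → ℂ) (C : ℕ → Fin n → ℂ)
    (Cc : ℕ → ℕ → ℕ → Fin n → Fin n → ℂ)
    (h : ∀ I : Finset (Fin n), I.Nonempty → ∑ j ∈ I, Γ j ≠ 0) :
    {z : Fin n → ℂ | GeneralSystem n m Γ C0 A C Cc z}.Finite := by
  have hm₀ : m ≠ 0 := by omega
  have hX (j : Fin n) := exists_X_pow_sub_mem_span_add
    (fun k : Fin n => isHomogeneous_weightedPsum Γ (m + k))
    (fun k => totalDegree_generalSystemLower_lt n hm₀ C0 A C Cc k)
    (X_mem_radical_span_weightedPsum h hm₀ (Fintype.card_fin n).le j)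
  choose N r hr hJ using hX
  have := finite_quotient_of_X_pow_sub_mem hr hJ
  exact (finite_zeroLocus_of_finite_quotient _).subset
    (setOf_generalSystem_subset_zeroLocus n m Γ C0 A C Cc)

/-- if all `Γ_j ≠ 0`, `C₀ ≠ 0` and every nonempty subset of the
`Γ_j` has nonzero sum, then the general system has only finitely many solutions
in `ℂ^n`. -/
theorem general_system_finite
    (n : ℕ) (hn : 2 ≤ n) (m : ℕ) (hm : 1 ≤ m)
    (Γ : Fin n → ℂ) (hΓ : ∀ j, Γ j ≠ 0) (C0 : ℂ) (hC0 : C0 ≠ 0)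
    (A : ℕ → ℕ → Fin n → ℂ) (C : ℕ → Fin n → ℂ)
    (Cc : ℕ → ℕ → ℕ → Fin n → Fin n → ℂ)
    (h : ∀ I : Finset (Fin n), I.Nonempty → ∑ j ∈ I, Γ j ≠ 0) :
    {z : Fin n → ℂ | GeneralSystem n m Γ C0 A C Cc z}.Finite :=
  general_system_finite_general n m hm Γ C0 A C Cc h
end

section
/- Let n ≥ 2, let z_1, …, z_n be pairwise distinct complex numbers, let Γ_1, …, Γ_n ∈ ℂ, and let k ≥ 1 be an integer. Then Σ_{j=1}^n Γ_j z_j^{k−1} Σ_{i≠j} Γ_i/(z_j − z_i) = Σ_{1≤i<j≤n} Γ_i Γ_j Σ_{r,s≥0, r+s=k−2} z_i^r z_j^s, where the right-hand side is 0 when k = 1 (and equals Σ_{i<j} Γ_i Γ_j when k = 2). -/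
/-! Grouping the terms (i, j) and (j, i) of the double sum leaves, for each pair i < j,
`Γ_i Γ_j (z_j^{k-1} - z_i^{k-1}) / (z_j - z_i)`, which is the complete homogeneous sum
`Σ_{r+s=k-2} z_i^r z_j^s` (and vanishes for k = 1). -/

open Finset

theorem Finset.sum_sum_erase_eq_sum_sum_ite_lt {ι M : Type*} [Fintype ι] [LinearOrder ι]
    [AddCommMonoid M] (F : ι → ι → M) :
    ∑ j, ∑ i ∈ univ.erase j, F i j = ∑ i, ∑ j, if i < j then F i j + F j i else 0 := by
  have hsplit : ∀ i j : ι, (if i < j then F i j + F j i else 0)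
      = (if i < j then F i j else 0) + if i < j then F j i else 0 := fun i j => by
    split_ifs <;> simp
  simp only [hsplit, sum_add_distrib]
  rw [sum_comm (f := fun i j => if i < j then F j i else 0)]
  simp only [← sum_add_distrib]
  conv_rhs => rw [sum_comm]
  refine sum_congr rfl fun j _ => ?_
  rw [← filter_ne', sum_filter]
  refine sum_congr rfl fun i _ => ?_
  rcases lt_trichotomy i j with h | rfl | h
  · simp [h, h.ne, h.not_gt]
  · simp
  · simp [h, h.ne', h.not_gt]

theorem sum_antidiagonal_pow_mul_pow_mul_sub {R : Type*} [CommRing R] (x y : R) (m : ℕ) :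
    (∑ p ∈ antidiagonal m, x ^ p.1 * y ^ p.2) * (x - y) = x ^ (m + 1) - y ^ (m + 1) := by
  rw [Nat.sum_antidiagonal_eq_sum_range_succ_mk, ← geom_sum₂_mul]
  simp only [Nat.add_sub_cancel]

theorem pow_succ_div_sub_add_pow_succ_div_sub {K : Type*} [Field K] {a b : K} (hab : a ≠ b)
    (m : ℕ) :
    b ^ (m + 1) / (b - a) + a ^ (m + 1) / (a - b) = ∑ p ∈ antidiagonal m, a ^ p.1 * b ^ p.2 := by
  have hab' : a - b ≠ 0 := sub_ne_zero.mpr hab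
  rw [← neg_sub a b, div_neg, neg_add_eq_sub, div_sub_div_same, div_eq_iff hab',
    sum_antidiagonal_pow_mul_pow_mul_sub]

theorem key_identity_general
    (n : ℕ) (z : Fin n → ℂ) (hz : ∀ i j, i ≠ j → z i ≠ z j)
    (Γ : Fin n → ℂ) (k : ℕ) (hk : 1 ≤ k) :
    ∑ j, Γ j * z j ^ (k - 1) *
        ∑ i ∈ Finset.univ.erase j, Γ i / (z j - z i)
    = if k = 1 then 0
      else ∑ i, ∑ j, if i < j then
          Γ i * Γ j * ∑ p ∈ Finset.HasAntidiagonal.antidiagonal (k - 2), z i ^ p.1 * z j ^ p.2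
        else 0 := by
  have hpair : ∀ i j, Γ j * z j ^ (k - 1) * (Γ i / (z j - z i))
      + Γ i * z i ^ (k - 1) * (Γ j / (z i - z j))
      = Γ i * Γ j * (z j ^ (k - 1) / (z j - z i) + z i ^ (k - 1) / (z i - z j)) := by
    intro i j
    ring
  conv_lhs => enter [2, j]; rw [mul_sum]
  rw [sum_sum_erase_eq_sum_sum_ite_lt]
  simp only [hpair]
  obtain ⟨m, rfl⟩ : ∃ m, k = m + 1 := ⟨k - 1, by omega⟩
  rcases m with _ | m
  · have hcancel : ∀ a b : ℂ, (b - a)⁻¹ + (a - b)⁻¹ = 0 := fun a b => by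
      rw [← neg_sub a b, inv_neg, neg_add_cancel]
    simp [hcancel]
  · rw [if_neg (by omega), show m + 1 + 1 - 2 = m by omega]
    refine sum_congr rfl fun i _ => sum_congr rfl fun j _ => ?_
    split_ifs with hij
    · rw [← pow_succ_div_sub_add_pow_succ_div_sub (hz i j hij.ne)]
      rfl
    · rfl

/-- for pairwise distinct `z_1, …, z_n` and any `Γ_1, …, Γ_n ∈ ℂ`
and `k ≥ 1`,
`Σ_j Γ_j z_j^{k−1} Σ_{i≠j} Γ_i/(z_j − z_i)
  = Σ_{i<j} Γ_i Γ_j Σ_{r+s=k−2} z_i^r z_j^s`,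
the right-hand side being `0` when `k = 1`. -/
theorem key_identity
    (n : ℕ) (hn : 2 ≤ n) (z : Fin n → ℂ) (hz : ∀ i j, i ≠ j → z i ≠ z j)
    (Γ : Fin n → ℂ) (k : ℕ) (hk : 1 ≤ k) :
    ∑ j, Γ j * z j ^ (k - 1) *
        ∑ i ∈ Finset.univ.erase j, Γ i / (z j - z i)
    = if k = 1 then 0
      else ∑ i, ∑ j, if i < j then
          Γ i * Γ j * ∑ p ∈ Finset.HasAntidiagonal.antidiagonal (k - 2), z i ^ p.1 * z j ^ p.2
        else 0 :=
  key_identity_general n z hz Γ k hk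
end

section
/- Let Γ ∈ ℝ \ {0}, set Γ_1 = Γ and Γ_2 = −Γ, and let c ∈ ℂ. Then the system Γ_1 z_1 + Γ_2 z_2 + c(Γ_1+Γ_2) = 0 and Γ_1 z_1² + Γ_2 z_2² + cΓ_1 z_1 + cΓ_2 z_2 − Γ_1Γ_2 = 0 has no solution (z_1, z_2) ∈ ℂ². -/
/-- with `Γ₁ = Γ ≠ 0` and `Γ₂ = −Γ`, the transformed polynomial
system for two vortices in a degree-one background flow has no solution. -/
theorem two_vortices_opposite_no_solution
    (Γ : ℝ) (hΓ : Γ ≠ 0) (c : ℂ) :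
    ¬ ∃ z₁ z₂ : ℂ,
      (Γ : ℂ) * z₁ + (-(Γ : ℂ)) * z₂ + c * ((Γ : ℂ) + (-(Γ : ℂ))) = 0 ∧
      (Γ : ℂ) * z₁ ^ 2 + (-(Γ : ℂ)) * z₂ ^ 2 + c * (Γ : ℂ) * z₁
        + c * (-(Γ : ℂ)) * z₂ - (Γ : ℂ) * (-(Γ : ℂ)) = 0 := by
  rintro ⟨z₁, z₂, h1, h2⟩
  have hΓc : (Γ : ℂ) ≠ 0 := by exact_mod_cast hΓ
  have hz : z₁ = z₂ := by
    have : (Γ : ℂ) * (z₁ - z₂) = 0 := by linear_combination h1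
    rcases mul_eq_zero.mp this with h | h
    · exact absurd h hΓc
    · exact sub_eq_zero.mp h
  subst hz
  have : (Γ : ℂ) * (Γ : ℂ) = 0 := by linear_combination h2
  exact hΓc (mul_self_eq_zero.mp this)
end

section
/- Let Γ_1, Γ_2 ∈ ℝ \ {0} with Γ_1 + Γ_2 ≠ 0, let c ∈ ℂ, let u ∈ ℂ satisfy u² = Γ_1 + Γ_2, and set z⁺ = (−c − Γ_2/u, −c + Γ_1/u) and z⁻ = (−c + Γ_2/u, −c − Γ_1/u). With the background flow w(ζ) = −(ζ + c)/(2πi), the identity −V_{z⁻}(−ζ − 2c) = V_{z⁺}(ζ) holds for every ζ ∈ ℂ that is not a coordinate of z⁺ and such that −ζ − 2c is not a coordinate of z⁻; consequently z⁺ and z⁻ are equivalent solutions (take a = −1, b = −2c), so these two solutions constitute exactly one fixed equilibrium configuration. -/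
/-- The complex velocity of the flow generated by two vortices `z = (z₁, z₂)`
with circulations `Γ₁, Γ₂` in the degree-one background flow
`w(ζ) = −(ζ + c)/(2πi)`. -/
noncomputable def velTwo (Γ₁ Γ₂ : ℝ) (c : ℂ) (z : ℂ × ℂ) (ζ : ℂ) : ℂ :=
  (1 / (2 * (Real.pi : ℂ) * Complex.I)) *
      ((Γ₁ : ℂ) / (ζ - z.1) + (Γ₂ : ℂ) / (ζ - z.2))
    + (-(ζ + c) / (2 * (Real.pi : ℂ) * Complex.I))

/-- with `z⁺ = (−c − Γ₂/u, −c + Γ₁/u)` and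
`z⁻ = (−c + Γ₂/u, −c − Γ₁/u)` where `u² = Γ₁ + Γ₂`, the identity
`−V_{z⁻}(−ζ − 2c) = V_{z⁺}(ζ)` holds wherever both sides are defined;
consequently `z⁺` and `z⁻` are equivalent solutions (take `a = −1`,
`b = −2c`), constituting exactly one fixed equilibrium configuration. -/
theorem two_vortices_equivalent
    (Γ₁ Γ₂ : ℝ) (h1 : Γ₁ ≠ 0) (h2 : Γ₂ ≠ 0) (hs : Γ₁ + Γ₂ ≠ 0)
    (c u : ℂ) (hu : u ^ 2 = (Γ₁ : ℂ) + (Γ₂ : ℂ)) :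
    (∀ ζ : ℂ, ζ ≠ -c - (Γ₂ : ℂ) / u → ζ ≠ -c + (Γ₁ : ℂ) / u →
      -ζ - 2 * c ≠ -c + (Γ₂ : ℂ) / u → -ζ - 2 * c ≠ -c - (Γ₁ : ℂ) / u →
      -(velTwo Γ₁ Γ₂ c (-c + (Γ₂ : ℂ) / u, -c - (Γ₁ : ℂ) / u) (-ζ - 2 * c))
        = velTwo Γ₁ Γ₂ c (-c - (Γ₂ : ℂ) / u, -c + (Γ₁ : ℂ) / u) ζ) ∧
    (∃ a : ℂ, a ≠ 0 ∧ ∃ b : ℂ,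
      ∀ ζ : ℂ, ζ ≠ -c - (Γ₂ : ℂ) / u → ζ ≠ -c + (Γ₁ : ℂ) / u →
        a * ζ + b ≠ -c + (Γ₂ : ℂ) / u → a * ζ + b ≠ -c - (Γ₁ : ℂ) / u →
        a * velTwo Γ₁ Γ₂ c (-c + (Γ₂ : ℂ) / u, -c - (Γ₁ : ℂ) / u) (a * ζ + b)
          = velTwo Γ₁ Γ₂ c (-c - (Γ₂ : ℂ) / u, -c + (Γ₁ : ℂ) / u) ζ) := by
  have key : ∀ ζ : ℂ,
      -(velTwo Γ₁ Γ₂ c (-c + (Γ₂ : ℂ) / u, -c - (Γ₁ : ℂ) / u) (-ζ - 2 * c))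
        = velTwo Γ₁ Γ₂ c (-c - (Γ₂ : ℂ) / u, -c + (Γ₁ : ℂ) / u) ζ := by
    intro ζ
    simp only [velTwo]
    rw [show (-ζ - 2*c - (-c + (Γ₂:ℂ)/u)) = -(ζ - (-c - (Γ₂:ℂ)/u)) by ring,
       show (-ζ - 2*c - (-c - (Γ₁:ℂ)/u)) = -(ζ - (-c + (Γ₁:ℂ)/u)) by ring,
       div_neg, div_neg]
    ring
  refine ⟨fun ζ _ _ _ _ => key ζ, -1, by norm_num, -2 * c, fun ζ _ _ _ _ => ?_⟩
  have := key ζ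
  rw [show (-1 : ℂ) * ζ + -2 * c = -ζ - 2 * c by ring]
  linear_combination this
end

section
/- Let Γ ∈ ℝ \ {0}, let α ∈ {1, 2}, set Γ_1 = Γ_2 = Γ and Γ_3 = −αΓ, and let u ∈ ℂ satisfy u² = (1 − 2α)Γ/2. Then the set of solutions (z_1, z_2, z_3) ∈ ℂ³ of the three-vortex quadrupole system is exactly {(−u, u, 0), (u, −u, 0)}; moreover these two solutions are distinct from each other and each has pairwise distinct coordinates. -/
/-- let `Γ ≠ 0`, `α ∈ {1, 2}`, `Γ₁ = Γ₂ = Γ`, `Γ₃ = −αΓ`, and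
`u² = (1 − 2α)Γ/2`.  Then the solution set of the three-vortex quadrupole
system is exactly `{(−u, u, 0), (u, −u, 0)}`; these two solutions are distinct
and each has pairwise distinct coordinates. -/
theorem three_vortices_case1
    (Γ : ℝ) (hΓ : Γ ≠ 0) (α : ℝ) (hα : α = 1 ∨ α = 2)
    (u : ℂ) (hu : u ^ 2 = (((1 - 2 * α) * Γ / 2 : ℝ) : ℂ)) :
    {p : ℂ × ℂ × ℂ |
      (Γ : ℂ) * p.1 + (Γ : ℂ) * p.2.1 + (-((α : ℂ) * (Γ : ℂ))) * p.2.2 = 0 ∧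
      (Γ : ℂ) * p.1 ^ 2 + (Γ : ℂ) * p.2.1 ^ 2
        + (-((α : ℂ) * (Γ : ℂ))) * p.2.2 ^ 2
        - (Γ : ℂ) ^ 2 - 2 * (Γ : ℂ) * (-((α : ℂ) * (Γ : ℂ))) = 0 ∧
      (Γ : ℂ) * p.1 ^ 3 + (Γ : ℂ) * p.2.1 ^ 3
        + (-((α : ℂ) * (Γ : ℂ))) * p.2.2 ^ 3
        - (Γ : ℂ) * ((Γ : ℂ) + (-((α : ℂ) * (Γ : ℂ)))) * p.1
        - (Γ : ℂ) * ((Γ : ℂ) + (-((α : ℂ) * (Γ : ℂ)))) * p.2.1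
        - 2 * (Γ : ℂ) * (-((α : ℂ) * (Γ : ℂ))) * p.2.2 = 0}
    = {(-u, u, 0), (u, -u, 0)} ∧
    ((-u, u, (0 : ℂ)) : ℂ × ℂ × ℂ) ≠ (u, -u, 0) ∧
    -u ≠ u ∧ -u ≠ (0 : ℂ) ∧ u ≠ 0 := by
  have hΓc : (Γ : ℂ) ≠ 0 := by exact_mod_cast hΓ
  have hu' : u ^ 2 = (1 - 2 * (α : ℂ)) * (Γ : ℂ) / 2 := by
    rw [hu]; push_cast; ring
  have hc : (1 - 2 * (α : ℂ)) ≠ 0 := by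
    rcases hα with h | h <;> subst h <;> norm_num
  have hu0 : u ≠ 0 := by
    have h2 : u ^ 2 ≠ 0 := by
      rw [hu']; exact div_ne_zero (mul_ne_zero hc hΓc) two_ne_zero
    exact fun h => h2 (by rw [h]; ring)
  refine ⟨?_, ?_, ?_, ?_, hu0⟩
  · ext ⟨x, y, z⟩
    simp only [Set.mem_setOf_eq, Set.mem_insert_iff, Set.mem_singleton_iff,
      Prod.mk.injEq]
    constructor
    · rintro ⟨h1, h2, h3⟩
      rcases hα with hα1 | hα1 <;> subst hα1 <;> push_cast at h1 h2 h3 hu'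
      · -- α = 1
        have hz3 : z = x + y := by
          have h : (Γ : ℂ) * (z - (x + y)) = 0 := by linear_combination -h1
          exact sub_eq_zero.mp ((mul_eq_zero.mp h).resolve_left hΓc)
        subst hz3
        have hp : x * y = (Γ : ℂ) / 2 := by
          have h : (Γ : ℂ) * (2 * (x * y) - (Γ : ℂ)) = 0 := by
            linear_combination -h2
          have := (mul_eq_zero.mp h).resolve_left hΓc
          linear_combination this / 2
        have hs : x + y = 0 := by
          have key : (Γ : ℂ) * ((Γ : ℂ) * (x + y)) = 0 := by
            linear_combination 2 * h3 + 6 * (Γ : ℂ) * (x + y) * hp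
          exact ((mul_eq_zero.mp
            (((mul_eq_zero.mp key).resolve_left hΓc)))).resolve_left hΓc
        have hy : y = -x := by linear_combination hs
        subst hy
        have hfac : (x - u) * (x + u) = 0 := by
          linear_combination -hp - hu'
        rcases mul_eq_zero.mp hfac with h | h
        · exact Or.inr ⟨by linear_combination h, by linear_combination -h,
            by linear_combination hs⟩
        · exact Or.inl ⟨by linear_combination h, by linear_combination -h,
            by linear_combination hs⟩
      · -- α = 2
        have hz3 : z = (x + y) / 2 := by
          have h : (Γ : ℂ) * (2 * (z - (x + y) / 2)) = 0 := by
            linear_combination -h1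
          have := (mul_eq_zero.mp h).resolve_left hΓc
          linear_combination this / 2
        subst hz3
        have hq : (x + y) ^ 2 - 4 * (x * y) + 6 * (Γ : ℂ) = 0 := by
          have h : (Γ : ℂ) * ((x + y) ^ 2 - 4 * (x * y) + 6 * (Γ : ℂ)) = 0 := by
            linear_combination 2 * h2
          exact (mul_eq_zero.mp h).resolve_left hΓc
        have hs : x + y = 0 := by
          have key : (Γ : ℂ) * ((Γ : ℂ) * (x + y)) = 0 := by
            linear_combination (-(2 : ℂ) / 3) * h3 + ((Γ : ℂ) * (x + y) / 2) * hq
          exact ((mul_eq_zero.mp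
            (((mul_eq_zero.mp key).resolve_left hΓc)))).resolve_left hΓc
        have hy : y = -x := by linear_combination hs
        subst hy
        have hfac : (x - u) * (x + u) = 0 := by
          linear_combination hq / 4 - hu'
        rcases mul_eq_zero.mp hfac with h | h
        · exact Or.inr ⟨by linear_combination h, by linear_combination -h,
            by linear_combination hs / 2⟩
        · exact Or.inl ⟨by linear_combination h, by linear_combination -h,
            by linear_combination hs / 2⟩
    · rintro (⟨hx, hy, hz⟩ | ⟨hx, hy, hz⟩) <;> subst hx <;> subst hy <;> subst hz <;>
        refine ⟨by ring, by linear_combination 2 * (Γ : ℂ) * hu', by ring⟩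
  · intro h
    have := congrArg Prod.fst h
    simp only at this
    exact hu0 (by linear_combination -this / 2)
  · intro h
    exact hu0 (by linear_combination -h / 2)
  · intro h
    exact hu0 (by linear_combination -h)
end

section
/- Let Γ_1 ∈ ℝ \ {0}, set Γ_2 = Γ_1 and Γ_3 = −(5/4)Γ_1 (so that 5Γ_1 + 4Γ_3 = 0), and let u ∈ ℂ satisfy u² = (Γ_1 + 2Γ_3)/2. Then the set of solutions (z_1, z_2, z_3) ∈ ℂ³ of the three-vortex quadrupole system is exactly {(−u, u, 0), (u, −u, 0)}; moreover these two solutions are distinct from each other and each has pairwise distinct coordinates. -/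
/-- let `Γ₁ ≠ 0`, `Γ₂ = Γ₁`, `Γ₃ = −(5/4)Γ₁` (so
`5Γ₁ + 4Γ₃ = 0`), and `u² = (Γ₁ + 2Γ₃)/2`.  Then the solution set of the
three-vortex quadrupole system is exactly `{(−u, u, 0), (u, −u, 0)}`; these two
solutions are distinct and each has pairwise distinct coordinates. -/
theorem three_vortices_repeated_case
    (Γ₁ : ℝ) (hΓ : Γ₁ ≠ 0)
    (u : ℂ) (hu : u ^ 2 = ((((Γ₁ + 2 * (-(5 / 4) * Γ₁)) / 2 : ℝ)) : ℂ)) :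
    {p : ℂ × ℂ × ℂ |
      (Γ₁ : ℂ) * p.1 + (Γ₁ : ℂ) * p.2.1
        + ((-(5 / 4) * Γ₁ : ℝ) : ℂ) * p.2.2 = 0 ∧
      (Γ₁ : ℂ) * p.1 ^ 2 + (Γ₁ : ℂ) * p.2.1 ^ 2
        + ((-(5 / 4) * Γ₁ : ℝ) : ℂ) * p.2.2 ^ 2
        - (Γ₁ : ℂ) ^ 2 - 2 * (Γ₁ : ℂ) * ((-(5 / 4) * Γ₁ : ℝ) : ℂ) = 0 ∧
      (Γ₁ : ℂ) * p.1 ^ 3 + (Γ₁ : ℂ) * p.2.1 ^ 3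
        + ((-(5 / 4) * Γ₁ : ℝ) : ℂ) * p.2.2 ^ 3
        - (Γ₁ : ℂ) * ((Γ₁ : ℂ) + ((-(5 / 4) * Γ₁ : ℝ) : ℂ)) * p.1
        - (Γ₁ : ℂ) * ((Γ₁ : ℂ) + ((-(5 / 4) * Γ₁ : ℝ) : ℂ)) * p.2.1
        - 2 * (Γ₁ : ℂ) * ((-(5 / 4) * Γ₁ : ℝ) : ℂ) * p.2.2 = 0}
    = {(-u, u, 0), (u, -u, 0)} ∧
    ((-u, u, (0 : ℂ)) : ℂ × ℂ × ℂ) ≠ (u, -u, 0) ∧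
    -u ≠ u ∧ -u ≠ (0 : ℂ) ∧ u ≠ 0 := by
  have hA : (Γ₁ : ℂ) ≠ 0 := by exact_mod_cast hΓ
  have hu' : u ^ 2 = -(3 / 4) * (Γ₁ : ℂ) := by
    push_cast at hu; linear_combination hu
  have hune : u ≠ 0 := by
    intro h
    apply hA
    have : (0 : ℂ) = -(3/4) * (Γ₁ : ℂ) := by rw [← hu', h]; ring
    linear_combination (4/3 : ℂ) * this
  refine ⟨?_, ?_, ?_, ?_, hune⟩
  · ext ⟨x, y, z⟩
    simp only [Set.mem_setOf_eq, Set.mem_insert_iff, Set.mem_singleton_iff,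
      Prod.mk.injEq]
    push_cast
    constructor
    · rintro ⟨h1, h2, h3⟩
      have hz : z = 4 / 5 * (x + y) := by
        have h := mul_left_cancel₀ hA
          (show (Γ₁ : ℂ) * (x + y - 5/4 * z) = (Γ₁ : ℂ) * 0 by linear_combination h1)
        linear_combination (-4/5 : ℂ) * h
      subst hz
      have key : (Γ₁ : ℂ) * ((3/50) * (x + y) ^ 3) = 0 := by
        linear_combination h3 - (3/2) * (x + y) * h2
      have hs : x + y = 0 := by
        have h3' : (x + y) ^ 3 = 0 := by
          rcases mul_eq_zero.1 key with h | h
          · exact absurd h hA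
          · rcases mul_eq_zero.1 h with h | h
            · norm_num at h
            · exact h
        exact pow_eq_zero_iff (by norm_num) |>.1 h3'
      have hy : y = -x := by linear_combination hs
      subst hy
      have hx2 : (x - u) * (x + u) = 0 := by
        have h2' : (Γ₁ : ℂ) * (2 * x ^ 2 + (3/2) * (Γ₁ : ℂ)) = 0 := by
          linear_combination h2
        have hxx : x ^ 2 = u ^ 2 := by
          have h := mul_left_cancel₀ hA
            (show (Γ₁ : ℂ) * (2 * x ^ 2 + (3/2) * (Γ₁ : ℂ)) = (Γ₁ : ℂ) * 0 by
              linear_combination h2')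
          linear_combination (1/2 : ℂ) * h - hu'
        linear_combination hxx
      rcases mul_eq_zero.1 hx2 with h | h
      · right
        have hxu : x = u := by linear_combination h
        subst hxu
        exact ⟨rfl, rfl, by ring⟩
      · left
        have hxu : x = -u := by linear_combination h
        subst hxu
        exact ⟨rfl, by ring, by ring⟩
    · rintro (⟨hx, hy, hz⟩ | ⟨hx, hy, hz⟩) <;> subst hx <;> subst hy <;> subst hz <;>
        refine ⟨by ring, by linear_combination 2 * (Γ₁ : ℂ) * hu', by ring⟩
  · intro h
    have := congrArg Prod.fst h
    simp only at this
    apply hune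
    linear_combination (-1/2 : ℂ) * this
  · intro h
    apply hune
    linear_combination (-1/2 : ℂ) * h
  · intro h
    exact hune (by linear_combination -h)
end
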